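/- Let μ be a monotone measure on a finite nonempty set X and f : X → ℝ. Then the Choquet integral can be written in terms of the Möbius transform of μ as ∫ f dμ = ∑_{∅ ≠ B ⊆ X} M_μ(B) · min_{x ∈ B} f(x). -/

import Mathlib

/-!
Möbius inversion gives `∑_{B ⊆ A} M_μ(B) = μ(A)`. Let `S(A) := ∑_{∅ ≠ B ⊆ A} M_μ(B) · min_B f`.
If `f a` is minimal on `insert a A`, every `B ∋ a` has minimum `f a`, so peeling off `a` gives
`S(insert a A) - S(A) = f a · (μ(insert a A) - μ(A))`. Applied to the sets
`A*_i = insert x*_i A*_{i+1}`, the Choquet sum telescopes to `S(X) - S(∅) = S(X)`.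
-/

open Finset

/-- The set `{x*_k, …, x*_{n-1}}` (0-indexed): the image under the enumeration `e`
of the indices `≥ k`. -/
def upSet {X : Type*} [DecidableEq X] {n : ℕ} (e : Fin n ≃ X) (k : ℕ) : Finset X :=
  (Finset.univ.filter fun j : Fin n => k ≤ (j : ℕ)).image e

/-- The Choquet integral of `f` with respect to the set function `μ`, computed via an
enumeration `e : Fin n ≃ X` (assumed to sort `f` nondecreasingly):
`∑ i, f(x*_i) · [μ(A*_i) − μ(A*_{i+1})]` where `A*_i = {x*_i, …, x*_{n-1}}`
(note `A*_n = ∅`, and `μ ∅ = 0` for a monotone measure). -/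
def choquetSum {X : Type*} [DecidableEq X] {n : ℕ} (μ : Finset X → ℝ) (f : X → ℝ)
    (e : Fin n ≃ X) : ℝ :=
  ∑ i : Fin n, f (e i) * (μ (upSet e i) - μ (upSet e ((i : ℕ) + 1)))

/-- The Möbius transform `M_μ(B) := ∑_{A ⊆ B} (−1)^{|B|−|A|} μ(A)`. -/
def mobius {X : Type*} (μ : Finset X → ℝ) (B : Finset X) : ℝ :=
  ∑ A ∈ B.powerset, (-1 : ℝ) ^ (B.card - A.card) * μ A

section

variable {X : Type*}

def mobiusChoquet (μ : Finset X → ℝ) (f : X → ℝ) (A : Finset X) : ℝ :=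
  ∑ B ∈ A.powerset, if hB : B.Nonempty then mobius μ B * B.inf' hB f else 0

@[simp]
lemma mobiusChoquet_empty (μ : Finset X → ℝ) (f : X → ℝ) : mobiusChoquet μ f ∅ = 0 := by
  simp [mobiusChoquet]

variable [DecidableEq X]

lemma mobius_insert (μ : Finset X → ℝ) {a : X} {B : Finset X} (ha : a ∉ B) :
    mobius μ (insert a B) = mobius (fun C => μ (insert a C)) B - mobius μ B := by
  have sign_succ : ∀ C ∈ B.powerset,
      (-1 : ℝ) ^ (#B + 1 - #C) * μ C = -((-1 : ℝ) ^ (#B - #C) * μ C) := by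
    intro C hC
    rw [Nat.sub_add_comm (card_le_card (mem_powerset.1 hC)), pow_succ]
    ring
  have sign_insert : ∀ C ∈ B.powerset,
      (-1 : ℝ) ^ (#B + 1 - #(insert a C)) * μ (insert a C)
        = (-1 : ℝ) ^ (#B - #C) * μ (insert a C) := by
    intro C hC
    rw [card_insert_of_notMem fun h => ha (mem_powerset.1 hC h), Nat.add_sub_add_right]
  simp only [mobius]
  rw [sum_powerset_insert ha, card_insert_of_notMem ha, sum_congr rfl sign_succ,
    sum_congr rfl sign_insert, sum_neg_distrib]
  ring

theorem sum_mobius_powerset (μ : Finset X → ℝ) (A : Finset X) :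
    ∑ B ∈ A.powerset, mobius μ B = μ A := by
  induction A using Finset.induction_on generalizing μ with
  | empty => simp [mobius]
  | insert a A ha ih =>
    rw [sum_powerset_insert ha,
      sum_congr rfl fun B hB => mobius_insert μ fun h => ha (mem_powerset.1 hB h),
      sum_sub_distrib, ih, ih]
    ring

lemma sum_mobius_powerset_insert (μ : Finset X → ℝ) {a : X} {A : Finset X} (ha : a ∉ A) :
    ∑ B ∈ A.powerset, mobius μ (insert a B) = μ (insert a A) - μ A := by
  rw [← sum_mobius_powerset μ (insert a A), sum_powerset_insert ha, sum_mobius_powerset]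
  ring

lemma mobiusChoquet_insert (μ : Finset X → ℝ) (f : X → ℝ) {a : X} {A : Finset X} (ha : a ∉ A)
    (hmin : ∀ x ∈ A, f a ≤ f x) :
    mobiusChoquet μ f (insert a A) = f a * (μ (insert a A) - μ A) + mobiusChoquet μ f A := by
  have inf'_insert_eq : ∀ B ∈ A.powerset,
      (if hB : (insert a B).Nonempty then mobius μ (insert a B) * (insert a B).inf' hB f else 0)
        = f a * mobius μ (insert a B) := by
    intro B hB
    have hinf : (insert a B).inf' (insert_nonempty a B) f = f a :=
      le_antisymm (inf'_le f (mem_insert_self a B)) <| le_inf' _ f <| by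
        simpa using fun x hx => hmin x (mem_powerset.1 hB hx)
    rw [dif_pos (insert_nonempty a B), hinf, mul_comm]
  rw [mobiusChoquet, sum_powerset_insert ha, sum_congr rfl inf'_insert_eq, ← mul_sum,
    sum_mobius_powerset_insert μ ha, mobiusChoquet, add_comm]

section UpSet

variable {n : ℕ} (e : Fin n ≃ X)

lemma mem_upSet {k : ℕ} {x : X} : x ∈ upSet e k ↔ k ≤ (e.symm x : ℕ) := by
  simp only [upSet, mem_image, mem_filter, mem_univ, true_and]
  exact ⟨by rintro ⟨j, hj, rfl⟩; simpa using hj, fun h => ⟨e.symm x, h, e.apply_symm_apply x⟩⟩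

lemma upSet_zero [Fintype X] : upSet e 0 = univ := by
  ext x
  simp [mem_upSet]

lemma upSet_of_le {k : ℕ} (hk : n ≤ k) : upSet e k = ∅ := by
  ext x
  simpa [mem_upSet] using (e.symm x).isLt.trans_le hk

lemma notMem_upSet_succ (i : Fin n) : e i ∉ upSet e (i + 1) := by
  simp [mem_upSet]

lemma upSet_eq_insert (i : Fin n) : upSet e i = insert (e i) (upSet e (i + 1)) := by
  ext x
  rw [mem_insert, mem_upSet, mem_upSet, ← e.symm_apply_eq, eq_comm, Fin.ext_iff]
  omega

end UpSet

lemma mobiusChoquet_upSet_sub_succ {n : ℕ} (μ : Finset X → ℝ) (f : X → ℝ) (e : Fin n ≃ X)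
    (hsort : Monotone (f ∘ e)) (i : Fin n) :
    mobiusChoquet μ f (upSet e i) - mobiusChoquet μ f (upSet e (i + 1))
      = f (e i) * (μ (upSet e i) - μ (upSet e (i + 1))) := by
  have hmin : ∀ x ∈ upSet e (i + 1), f (e i) ≤ f x := by
    intro x hx
    simpa using hsort (show i ≤ e.symm x from Nat.le_of_succ_le ((mem_upSet e).1 hx))
  rw [upSet_eq_insert e i, mobiusChoquet_insert μ f (notMem_upSet_succ e i) hmin]
  ring

end

theorem choquet_integral_eq_mobius_min_general
    {X : Type*} [Fintype X] [DecidableEq X] {n : ℕ}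
    (μ : Finset X → ℝ)
    (f : X → ℝ) (e : Fin n ≃ X) (hsort : Monotone (f ∘ e)) :
    choquetSum μ f e =
      ∑ B ∈ (Finset.univ : Finset X).powerset,
        if hB : B.Nonempty then mobius μ B * B.inf' hB f else 0 := by
  set S : ℕ → ℝ := fun k => mobiusChoquet μ f (upSet e k)
  calc choquetSum μ f e = ∑ i : Fin n, (S i - S (i + 1)) :=
        sum_congr rfl fun i _ => (mobiusChoquet_upSet_sub_succ μ f e hsort i).symm
    _ = S 0 - S n := by rw [Fin.sum_univ_eq_sum_range (fun i => S i - S (i + 1)), sum_range_sub']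
    _ = mobiusChoquet μ f univ := by simp [S, upSet_zero, upSet_of_le]

/-- `∫ f dμ = ∑_{∅ ≠ B ⊆ X} M_μ(B) · min_{x ∈ B} f(x)`, where `M_μ` is
the Möbius transform of `μ`. -/
theorem choquet_integral_eq_mobius_min
    {X : Type*} [Fintype X] [DecidableEq X] {n : ℕ} (hn : 0 < n)
    (μ : Finset X → ℝ) (hμ_empty : μ ∅ = 0)
    (hμ_mono : ∀ A B : Finset X, A ⊆ B → μ A ≤ μ B)
    (f : X → ℝ) (e : Fin n ≃ X) (hsort : Monotone (f ∘ e)) :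
    choquetSum μ f e =
      ∑ B ∈ (Finset.univ : Finset X).powerset,
        if hB : B.Nonempty then mobius μ B * B.inf' hB f else 0 :=
  choquet_integral_eq_mobius_min_general μ f e hsort
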